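/- arXiv:1511.04556 — 4 statements merged into one kernel-verified Lean document; each statement's English description precedes it below -/
import Mathlib

section
/- For any two probability measures P0, P1 on the same measurable space and any event-based test, the minimum over tests φ taking values in {0,1} of the maximum error max(P0(φ=1), P1(φ=0)) is at least (1/4)·exp(−KL(P1‖P0)). -/
/-!
Bretagnolle–Huber via the Bhattacharyya coefficient `∫ √(dP0/dP1) dP1`. Since
`√(dP0/dP1) = exp (-llr P1 P0 / 2)` `P1`-a.e., Jensen's inequality bounds it below by
`exp (-KL(P1‖P0) / 2)`. Splitting it over `A` and `Aᶜ`, Cauchy–Schwarz bounds the two pieces by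
`√(P0 A · P1 A) ≤ √(P0 A)` and `√(P0 Aᶜ · P1 Aᶜ) ≤ √(P1 Aᶜ)`, so
`exp (-KL / 2) ≤ 2 √(max (P0 A) (P1 Aᶜ))`; squaring gives the claim.
-/

open MeasureTheory

/-- Kullback–Leibler divergence (real-valued), `KL(P‖Q) = ∫ log (dP/dQ) dP`. -/
noncomputable def klDiv {α : Type*} [MeasurableSpace α] (P Q : Measure α) : ℝ :=
  ∫ x, MeasureTheory.llr P Q x ∂P

open Real

section CauchySchwarz

variable {α : Type*} [MeasurableSpace α] {μ : Measure α} {g : α → ℝ}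

lemma MeasureTheory.Integrable.memLp_two_sqrt (hg : Integrable g μ) (hg0 : 0 ≤ᵐ[μ] g) :
    MemLp (fun x ↦ √(g x)) 2 μ := by
  refine (memLp_two_iff_integrable_sq
    (continuous_sqrt.comp_aestronglyMeasurable hg.aestronglyMeasurable)).2 (hg.congr ?_)
  filter_upwards [hg0] with x hx using (sq_sqrt hx).symm

lemma MeasureTheory.Integrable.sqrt [IsFiniteMeasure μ] (hg : Integrable g μ) (hg0 : 0 ≤ᵐ[μ] g) :
    Integrable (fun x ↦ √(g x)) μ :=
  (hg.memLp_two_sqrt hg0).integrable one_le_two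

lemma integral_sqrt_le_sqrt_integral_mul [IsFiniteMeasure μ] (hg : Integrable g μ)
    (hg0 : 0 ≤ᵐ[μ] g) :
    ∫ x, √(g x) ∂μ ≤ √((∫ x, g x ∂μ) * μ.real Set.univ) := by
  have h := integral_mul_le_Lp_mul_Lq_of_nonneg HolderConjugate.two_two
    (Filter.Eventually.of_forall fun x ↦ sqrt_nonneg (g x))
    (Filter.Eventually.of_forall fun _ ↦ zero_le_one) (by simpa using hg.memLp_two_sqrt hg0)
    (by simpa using memLp_const (μ := μ) (p := 2) (1 : ℝ))
  simp only [rpow_two, mul_one, one_pow, integral_const, smul_eq_mul, ← sqrt_eq_rpow] at h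
  have hsq : ∫ x, √(g x) ^ 2 ∂μ = ∫ x, g x ∂μ := by
    refine integral_congr_ae ?_
    filter_upwards [hg0] with x hx using sq_sqrt hx
  rwa [hsq, ← sqrt_mul' _ measureReal_nonneg] at h

end CauchySchwarz

section Bhattacharyya

variable {α : Type*} [MeasurableSpace α]

lemma setIntegral_sqrt_rnDeriv_le (μ ν : Measure α) [IsFiniteMeasure μ] [IsFiniteMeasure ν]
    (s : Set α) :
    ∫ x in s, √((ν.rnDeriv μ x).toReal) ∂μ ≤ √(ν.real s * μ.real s) :=
  calc ∫ x in s, √((ν.rnDeriv μ x).toReal) ∂μ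
      ≤ √((∫ x in s, (ν.rnDeriv μ x).toReal ∂μ) * (μ.restrict s).real Set.univ) :=
        integral_sqrt_le_sqrt_integral_mul Measure.integrable_toReal_rnDeriv.integrableOn
          (.of_forall fun _ ↦ ENNReal.toReal_nonneg)
    _ ≤ √(ν.real s * μ.real s) := by
        rw [measureReal_restrict_apply_univ]
        gcongr
        exact Measure.setIntegral_toReal_rnDeriv_le (measure_ne_top ν s)

lemma exp_neg_half_klDiv_le_integral_sqrt_rnDeriv (P Q : Measure α) [IsProbabilityMeasure P]
    [IsFiniteMeasure Q] (hac : P ≪ Q) (hint : Integrable (llr P Q) P) :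
    exp (-klDiv P Q / 2) ≤ ∫ x, √((Q.rnDeriv P x).toReal) ∂P := by
  have hexp : (fun x ↦ exp (-llr P Q x / 2)) =ᵐ[P] fun x ↦ √((Q.rnDeriv P x).toReal) := by
    filter_upwards [exp_neg_llr hac] with x hx
    rw [exp_half, hx]
  have hsqrt : Integrable (fun x ↦ √((Q.rnDeriv P x).toReal)) P :=
    Measure.integrable_toReal_rnDeriv.sqrt (.of_forall fun _ ↦ ENNReal.toReal_nonneg)
  calc exp (-klDiv P Q / 2) = exp (∫ x, -llr P Q x / 2 ∂P) := by
        rw [integral_div, integral_neg, klDiv]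
    _ ≤ ∫ x, exp (-llr P Q x / 2) ∂P :=
        convexOn_exp.map_integral_le continuous_exp.continuousOn isClosed_univ
          (.of_forall fun _ ↦ Set.mem_univ _) (hint.neg.div_const 2) (hsqrt.congr hexp.symm)
    _ = ∫ x, √((Q.rnDeriv P x).toReal) ∂P := integral_congr_ae hexp

lemma exp_neg_half_klDiv_le_sqrt_add_sqrt (P Q : Measure α) [IsProbabilityMeasure P]
    [IsProbabilityMeasure Q] (hac : P ≪ Q) (hint : Integrable (llr P Q) P) {A : Set α}
    (hA : MeasurableSet A) :
    exp (-klDiv P Q / 2) ≤ √(Q.real A) + √(P.real Aᶜ) := by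
  have hsqrt : Integrable (fun x ↦ √((Q.rnDeriv P x).toReal)) P :=
    Measure.integrable_toReal_rnDeriv.sqrt (.of_forall fun _ ↦ ENNReal.toReal_nonneg)
  calc exp (-klDiv P Q / 2) ≤ ∫ x, √((Q.rnDeriv P x).toReal) ∂P :=
        exp_neg_half_klDiv_le_integral_sqrt_rnDeriv P Q hac hint
    _ = (∫ x in A, √((Q.rnDeriv P x).toReal) ∂P) + ∫ x in Aᶜ, √((Q.rnDeriv P x).toReal) ∂P :=
        (integral_add_compl hA hsqrt).symm
    _ ≤ √(Q.real A * P.real A) + √(Q.real Aᶜ * P.real Aᶜ) :=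
        add_le_add (setIntegral_sqrt_rnDeriv_le P Q A) (setIntegral_sqrt_rnDeriv_le P Q Aᶜ)
    _ ≤ √(Q.real A * 1) + √(1 * P.real Aᶜ) := by
        gcongr <;> exact measureReal_le_one
    _ = √(Q.real A) + √(P.real Aᶜ) := by rw [mul_one, one_mul]

end Bhattacharyya

lemma one_fourth_mul_exp_neg_le_max {K a b : ℝ} (ha : 0 ≤ a)
    (h : exp (-K / 2) ≤ √a + √b) :
    1 / 4 * exp (-K) ≤ max a b := by
  have hsum : √a + √b ≤ 2 * √(max a b) := by
    linarith [sqrt_le_sqrt (le_max_left a b), sqrt_le_sqrt (le_max_right a b)]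
  have hsq : exp (-K) = exp (-K / 2) ^ 2 := by rw [← exp_nat_mul]; ring_nf
  have := pow_le_pow_left₀ (exp_pos _).le (h.trans hsum) 2
  rw [mul_pow, sq_sqrt (ha.trans (le_max_left a b))] at this
  linarith

/-- For any two probability measures `P0`, `P1` (with `P1 ≪ P0`) and any test given by a
measurable rejection region `A` (i.e. `φ = 1_A`), the maximum error
`max (P0 A) (P1 Aᶜ)` is at least `(1/4) exp (- KL(P1‖P0))`. -/
theorem test_error_lower_bound_exp {α : Type*} [MeasurableSpace α]
    (P0 P1 : Measure α) [IsProbabilityMeasure P0] [IsProbabilityMeasure P1]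
    (hac : P1 ≪ P0) (hint : Integrable (MeasureTheory.llr P1 P0) P1)
    (A : Set α) (hA : MeasurableSet A) :
    (1 / 4 : ℝ) * Real.exp (- klDiv P1 P0) ≤
      max (P0 A).toReal (P1 Aᶜ).toReal :=
  one_fourth_mul_exp_neg_le_max measureReal_nonneg
    (exp_neg_half_klDiv_le_sqrt_add_sqrt P1 P0 hac hint hA)
end

section
/- The soft thresholding function δ^s(d,λ) = sign(d)·max(|d|−λ, 0) satisfies, for all β, ξ ∈ ℝ and λ > 0: |δ^s(β+ξ, λ) − β| ≤ 3·(min(|β|, λ) + |ξ|·1_{|ξ| > λ/2}). -/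
/-!
Soft thresholding moves every point by at most `λ`, so the error is at most `λ + |ξ|`; this
settles the cases `|ξ| > λ/2` and `|β| ≥ λ`. Otherwise `|ξ| ≤ λ`, so `δˢ(β + ξ, λ)` has size at
most `|β + ξ| - λ ≤ |β|`, and the error is at most `2|β|`.
-/

/-- Soft thresholding: `δˢ(d, λ) = sign d · (|d| - λ)₊`. -/
noncomputable def softThresh (d lam : ℝ) : ℝ := Real.sign d * max (|d| - lam) 0

lemma abs_softThresh_le (d lam : ℝ) : |softThresh d lam| ≤ max (|d| - lam) 0 := by
  rw [softThresh, abs_mul, abs_of_nonneg (le_max_right (|d| - lam) 0)]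
  rcases lt_trichotomy d 0 with hd | rfl | hd
  · simp [Real.sign_of_neg hd]
  · simp
  · simp [Real.sign_of_pos hd]

lemma abs_softThresh_sub_self_le (d : ℝ) {lam : ℝ} (hlam : 0 ≤ lam) :
    |softThresh d lam - d| ≤ lam := by
  rw [abs_le]
  rcases lt_trichotomy d 0 with hd | rfl | hd
  · simp only [softThresh, Real.sign_of_neg hd, abs_of_neg hd]
    constructor <;> cases max_cases (-d - lam) 0 <;> linarith
  · simp [softThresh, hlam]
  · simp only [softThresh, Real.sign_of_pos hd, abs_of_pos hd]
    constructor <;> cases max_cases (d - lam) 0 <;> linarith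

lemma abs_softThresh_add_sub_le_add_abs (β ξ : ℝ) {lam : ℝ} (hlam : 0 ≤ lam) :
    |softThresh (β + ξ) lam - β| ≤ lam + |ξ| :=
  calc |softThresh (β + ξ) lam - β|
      = |(softThresh (β + ξ) lam - (β + ξ)) + ξ| := by ring_nf
    _ ≤ |softThresh (β + ξ) lam - (β + ξ)| + |ξ| := abs_add_le _ _
    _ ≤ lam + |ξ| := by gcongr; exact abs_softThresh_sub_self_le _ hlam

lemma abs_softThresh_add_sub_le_two_mul_abs (β : ℝ) {ξ lam : ℝ} (hξ : |ξ| ≤ lam) :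
    |softThresh (β + ξ) lam - β| ≤ 2 * |β| := by
  have hshrunk : |softThresh (β + ξ) lam| ≤ |β| :=
    (abs_softThresh_le _ _).trans <| max_le (by linarith [abs_add_le β ξ]) (abs_nonneg β)
  linarith [abs_sub (softThresh (β + ξ) lam) β]

/-- The soft thresholding function satisfies the shrinkage-stability bound
`|δˢ(β+ξ, λ) - β| ≤ 3 (min(|β|, λ) + |ξ| 1_{|ξ| > λ/2})`. -/
theorem soft_thresh_stability (β ξ lam : ℝ) (hlam : 0 < lam) :
    |softThresh (β + ξ) lam - β| ≤
      3 * (min |β| lam + |ξ| * (if lam / 2 < |ξ| then 1 else 0)) := by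
  have hnear := abs_softThresh_add_sub_le_add_abs β ξ hlam.le
  split_ifs with hξ
  · linarith [le_min (abs_nonneg β) hlam.le]
  · replace hξ := not_lt.mp hξ
    rcases le_total lam |β| with hβ | hβ
    · rw [min_eq_right hβ]
      linarith
    · rw [min_eq_left hβ]
      linarith [abs_softThresh_add_sub_le_two_mul_abs β (show |ξ| ≤ lam by linarith), abs_nonneg β]
end

section
/- The hard thresholding function δ^h(d,λ) = d·1_{|d|>λ} satisfies, for all β, ξ ∈ ℝ and λ > 0: |δ^h(β+ξ, λ) − β| ≤ C·(min(|β|, λ) + |ξ|·1_{|ξ| > λ/2}) for some universal constant C (for instance C = 3 works). -/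
/-- Hard thresholding: `δʰ(d, λ) = d · 1_{|d| > λ}`. -/
noncomputable def hardThresh (d lam : ℝ) : ℝ := if lam < |d| then d else 0

/-!
If the noisy coefficient `β + ξ` survives the threshold, the error is `|ξ|`; if it is killed,
the error is `|β| ≤ |β + ξ| + |ξ| ≤ λ + |ξ|`. Large noise (`|ξ| > λ/2`) pays for itself in both
cases. Small noise (`|ξ| ≤ λ/2`) forces `|β| > λ/2 ≥ |ξ|` when the coefficient survives, and
`|β| ≤ 3λ/2` when it is killed, so the error is then at most `(3/2) min(|β|, λ)`.
-/

section HardThresh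

variable {β ξ lam : ℝ}

theorem abs_hardThresh_add_sub_of_lt (h : lam < |β + ξ|) :
    |hardThresh (β + ξ) lam - β| = |ξ| := by
  simp [hardThresh, h]

theorem abs_hardThresh_add_sub_of_le (h : |β + ξ| ≤ lam) :
    |hardThresh (β + ξ) lam - β| = |β| := by
  simp [hardThresh, not_lt.2 h]

theorem abs_hardThresh_add_sub_le_of_large_noise (hlam : 0 ≤ lam) :
    |hardThresh (β + ξ) lam - β| ≤ min |β| lam + |ξ| := by
  rcases lt_or_ge lam |β + ξ| with hkept | hkilled
  · rw [abs_hardThresh_add_sub_of_lt hkept]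
    linarith [le_min (abs_nonneg β) hlam]
  · rw [abs_hardThresh_add_sub_of_le hkilled]
    have hβ := abs_sub_abs_le_abs_add β ξ
    rcases min_cases |β| lam with ⟨hmin, -⟩ | ⟨hmin, -⟩ <;> rw [hmin]
    · linarith [abs_nonneg ξ]
    · linarith

theorem abs_hardThresh_add_sub_le_of_small_noise (hξ : |ξ| ≤ lam / 2) :
    |hardThresh (β + ξ) lam - β| ≤ 3 / 2 * min |β| lam := by
  rcases lt_or_ge lam |β + ξ| with hkept | hkilled
  · rw [abs_hardThresh_add_sub_of_lt hkept]
    have : |ξ| ≤ min |β| lam :=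
      le_min (by linarith [abs_add_le β ξ]) (by linarith [abs_nonneg ξ])
    linarith [abs_nonneg ξ]
  · rw [abs_hardThresh_add_sub_of_le hkilled]
    have hβ := abs_sub_abs_le_abs_add β ξ
    rcases min_cases |β| lam with ⟨hmin, -⟩ | ⟨hmin, -⟩ <;> rw [hmin]
    · linarith [abs_nonneg β]
    · linarith

theorem abs_hardThresh_add_sub_le (hlam : 0 ≤ lam) :
    |hardThresh (β + ξ) lam - β| ≤
      3 / 2 * (min |β| lam + |ξ| * (if lam / 2 < |ξ| then 1 else 0)) := by
  split_ifs with hξ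
  · have := abs_hardThresh_add_sub_le_of_large_noise (β := β) (ξ := ξ) hlam
    linarith [le_min (abs_nonneg β) hlam, abs_nonneg ξ]
  · simpa using abs_hardThresh_add_sub_le_of_small_noise (not_lt.1 hξ)

end HardThresh

/-- The hard thresholding function satisfies the shrinkage-stability bound
`|δʰ(β+ξ, λ) - β| ≤ C (min(|β|, λ) + |ξ| 1_{|ξ| > λ/2})` for some universal
constant `C` (for instance `C = 3` works). -/
theorem hard_thresh_stability :
    ∃ C : ℝ, 0 < C ∧ C = 3 ∧ ∀ β ξ lam : ℝ, 0 < lam →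
      |hardThresh (β + ξ) lam - β| ≤
        C * (min |β| lam + |ξ| * (if lam / 2 < |ξ| then 1 else 0)) := by
  refine ⟨3, by norm_num, rfl, fun β ξ lam hlam => ?_⟩
  have hbound : 0 ≤ min |β| lam + |ξ| * (if lam / 2 < |ξ| then 1 else 0) := by
    have := le_min (abs_nonneg β) hlam.le
    positivity
  linarith [abs_hardThresh_add_sub_le (β := β) (ξ := ξ) hlam.le]
end

section
/- If a shrinkage function δ satisfies |δ^s(d,λ)| ≤ |δ(d,λ)| ≤ |δ^h(d,λ)| with sign(δ(d,λ)) = sign(d), and both δ^s and δ^h satisfy the stability bound |δ(β+ξ,λ) − β| ≤ C(min(|β|,λ) + |ξ|·1_{|ξ|>λ/2}), then δ also satisfies this bound with the same constant C. In particular SCAD thresholding satisfies the stability condition. -/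
open Set

theorem abs_sub_le_max_of_mem_uIcc {a b x : ℝ} (β : ℝ) (hx : x ∈ uIcc a b) :
    |x - β| ≤ max |a - β| |b - β| := by
  simpa only [Real.dist_eq] using (convexOn_univ_dist β).le_max_of_mem_segment
    (mem_univ a) (mem_univ b) (segment_eq_uIcc a b ▸ hx)

theorem mem_uIcc_of_abs_le_of_abs_le {a b x : ℝ} (hax : 0 ≤ a * x) (hxb : 0 ≤ x * b)
    (ha : |a| ≤ |x|) (hb : |x| ≤ |b|) : x ∈ uIcc a b := by
  rcases lt_trichotomy x 0 with hx | rfl | hx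
  · have ha0 : a ≤ 0 := nonpos_of_mul_nonneg_left hax hx
    have hb0 : b ≤ 0 := nonpos_of_mul_nonneg_right hxb hx
    rw [abs_of_nonpos ha0, abs_of_neg hx] at ha
    rw [abs_of_neg hx, abs_of_nonpos hb0] at hb
    exact mem_uIcc.2 (Or.inr ⟨by linarith, by linarith⟩)
  · rw [abs_zero, abs_nonpos_iff] at ha
    exact ha ▸ left_mem_uIcc
  · have ha0 : 0 ≤ a := nonneg_of_mul_nonneg_left hax hx
    have hb0 : 0 ≤ b := nonneg_of_mul_nonneg_right hxb hx
    rw [abs_of_nonneg ha0, abs_of_pos hx] at ha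
    rw [abs_of_pos hx, abs_of_nonneg hb0] at hb
    exact mem_uIcc_of_le ha hb

theorem softThresh_mul_nonneg {d x : ℝ} (lam : ℝ) (h : 0 ≤ d * x) :
    0 ≤ softThresh d lam * x := by
  rw [softThresh, mul_right_comm]
  refine mul_nonneg ?_ (le_max_right _ _)
  rcases lt_trichotomy d 0 with hd | rfl | hd
  · rw [Real.sign_of_neg hd, neg_one_mul, neg_nonneg]
    exact nonpos_of_mul_nonneg_right h hd
  · rw [Real.sign_zero, zero_mul]
  · rw [Real.sign_of_pos hd, one_mul]
    exact nonneg_of_mul_nonneg_right h hd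

theorem mul_hardThresh_nonneg {d x : ℝ} (lam : ℝ) (h : 0 ≤ d * x) :
    0 ≤ x * hardThresh d lam := by
  unfold hardThresh
  split_ifs
  · rwa [mul_comm]
  · rw [mul_zero]

/-- If a shrinkage function `δ` is sandwiched in absolute value between soft and hard
thresholding with matching sign, and both soft and hard thresholding satisfy the
stability bound with constant `C`, then `δ` satisfies the same bound. -/
theorem sandwich_thresh_stability (C : ℝ) (δ : ℝ → ℝ → ℝ)
    (hsand : ∀ d lam : ℝ, 0 < lam →
      |softThresh d lam| ≤ |δ d lam| ∧ |δ d lam| ≤ |hardThresh d lam| ∧ 0 ≤ d * δ d lam)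
    (hsoft : ∀ β ξ lam : ℝ, 0 < lam →
      |softThresh (β + ξ) lam - β| ≤
        C * (min |β| lam + |ξ| * (if lam / 2 < |ξ| then 1 else 0)))
    (hhard : ∀ β ξ lam : ℝ, 0 < lam →
      |hardThresh (β + ξ) lam - β| ≤
        C * (min |β| lam + |ξ| * (if lam / 2 < |ξ| then 1 else 0))) :
    ∀ β ξ lam : ℝ, 0 < lam →
      |δ (β + ξ) lam - β| ≤
        C * (min |β| lam + |ξ| * (if lam / 2 < |ξ| then 1 else 0)) := by
  intro β ξ lam hlam
  obtain ⟨habs_soft, habs_hard, hsign⟩ := hsand (β + ξ) lam hlam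
  have hmem : δ (β + ξ) lam ∈ uIcc (softThresh (β + ξ) lam) (hardThresh (β + ξ) lam) :=
    mem_uIcc_of_abs_le_of_abs_le (softThresh_mul_nonneg lam hsign)
      (mul_hardThresh_nonneg lam hsign) habs_soft habs_hard
  exact (abs_sub_le_max_of_mem_uIcc β hmem).trans
    (max_le (hsoft β ξ lam hlam) (hhard β ξ lam hlam))
end
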